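/- Let t0, y0 ∈ ℝ, a > 0, I = [t0, t0+a], let f : I × ℝ → ℝ be continuous, let α be a lower solution and β an upper solution of y' = f(t,y), y(t0) = y0 on I with α ≤ β on I, and let L > 0 satisfy |f(t,y)| ≤ L whenever t ∈ I and α(t) ≤ y ≤ β(t), and |α'(t)| ≤ L, |β'(t)| ≤ L for all t ∈ I. Let 𝒜 be the set of continuous functions γ : I → ℝ such that α ≤ γ ≤ β on I and |γ(t) − γ(s)| ≤ L|t − s| for all s, t ∈ I. Then for all t1, t2 ∈ I with t1 < t2 and every y1 ∈ [α(t1), β(t1)], there exists γ ∈ 𝒜 such that γ(t1) = y1 and γ(t2) = y1 + ∫_{t1}^{t2} f(s, γ(s)) ds. -/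

import Mathlib

/-!
For a slope `m`, let `γₘ` be the line through `(t₁, y₁)` of slope `m` clamped between `α` and
`β`, and `wₘ t = y₁ + ∫_{t₁}^{t} f(s, γₘ s) ds` (`ODE.picard f t₁ y₁ γₘ`). For `|m| ≤ L` the
function `γₘ` lies in `𝒜`, and `|wₘ t - y₁| ≤ L (t - t₁)` because `|f| ≤ L` between `α` and `β`.
Where `w_L` reaches `β` it is still below the line of slope `L`, so there `γ_L = β` and
`w_L' = f(t, β) ≤ β'`; a comparison argument gives `w_L ≤ β`, and symmetrically `α ≤ w_{-L}`.
Hence `γₘ t₂ - wₘ t₂` is `≥ 0` at `m = L` and `≤ 0` at `m = -L`. It is continuous in `m` by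
dominated convergence, so the intermediate value theorem produces the slope.
-/

open Set Filter Topology Interval ODE

theorem image_le_of_deriv_le_deriv_boundary_of_contact {f f' B B' : ℝ → ℝ} {a b : ℝ}
    (hf : ∀ x ∈ Icc a b, HasDerivWithinAt f (f' x) (Icc a b) x) (ha : f a ≤ B a)
    (hB : ∀ x ∈ Icc a b, HasDerivWithinAt B (B' x) (Icc a b) x)
    (bound : ∀ x ∈ Ico a b, B x ≤ f x → f' x ≤ B' x) :
    ∀ x ∈ Icc a b, f x ≤ B x := by
  intro x hx
  have hright : ∀ {g g' : ℝ → ℝ}, (∀ x ∈ Icc a b, HasDerivWithinAt g (g' x) (Icc a b) x) →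
      ∀ x ∈ Ico a b, HasDerivWithinAt g (g' x) (Ici x) x := fun hg x hx =>
    (hg x (Ico_subset_Icc_self hx)).mono_of_mem_nhdsWithin (Icc_mem_nhdsGE_of_mem hx)
  -- raising `B` by `ε * (t - a)` turns the contact condition into a strict one
  have hε : ∀ ε > 0, f x ≤ B x + ε * (x - a) := by
    intro ε hε
    have hline : ∀ t, HasDerivWithinAt (fun t => ε * (t - a)) ε (Ici t) t := fun t => by
      simpa using ((hasDerivWithinAt_id t (Ici t)).sub_const a).const_mul ε
    refine image_le_of_deriv_right_lt_deriv_boundary' (B := fun t => B t + ε * (t - a))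
      (B' := fun t => B' t + ε) (HasDerivWithinAt.continuousOn hf) (hright hf)
      (by simpa using ha) ((HasDerivWithinAt.continuousOn hB).add (by fun_prop))
      (fun t ht => (hright hB t ht).add (hline t)) (fun t ht hft => ?_) hx
    have hBf : B t ≤ f t := by
      rw [hft]; exact le_add_of_nonneg_right (mul_nonneg hε.le (sub_nonneg.2 ht.1))
    linarith [bound t ht hBf]
  have hlim : Tendsto (fun ε => B x + ε * (x - a)) (𝓝[>] 0) (𝓝 (B x)) :=
    tendsto_nhdsWithin_of_tendsto_nhds <|
      (by fun_prop : Continuous fun ε : ℝ => B x + ε * (x - a)).tendsto' 0 (B x) (by simp)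
  exact ge_of_tendsto hlim (eventually_nhdsWithin_of_forall hε)

theorem Convex.abs_image_sub_le_of_abs_hasDerivWithin_le {g g' : ℝ → ℝ} {s : Set ℝ} {C : ℝ}
    (hs : Convex ℝ s) (hg : ∀ x ∈ s, HasDerivWithinAt g (g' x) s x)
    (bound : ∀ x ∈ s, |g' x| ≤ C) : ∀ x ∈ s, ∀ y ∈ s, |g y - g x| ≤ C * |y - x| :=
  fun _ hx _ hy => hs.norm_image_sub_le_of_norm_hasDerivWithin_le hg bound hx hy

section ClampedLine

variable {α β : ℝ → ℝ} {t₁ y₁ m t L : ℝ} {s : Set ℝ}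

variable (α β t₁ y₁) in
noncomputable def clampedLine (m t : ℝ) : ℝ :=
  max (α t) (min (y₁ + m * (t - t₁)) (β t))

theorem clampedLine_self (hy₁ : y₁ ∈ Icc (α t₁) (β t₁)) (m : ℝ) :
    clampedLine α β t₁ y₁ m t₁ = y₁ := by
  simp [clampedLine, hy₁.1, hy₁.2]

theorem clampedLine_mem_Icc (h : α t ≤ β t) : clampedLine α β t₁ y₁ m t ∈ Icc (α t) (β t) :=
  ⟨le_max_left _ _, max_le h (min_le_right _ _)⟩

theorem clampedLine_eq_right (h : α t ≤ β t) (hβ : β t ≤ y₁ + m * (t - t₁)) :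
    clampedLine α β t₁ y₁ m t = β t := by
  rw [clampedLine, min_eq_right hβ, max_eq_right h]

theorem clampedLine_eq_left (hα : y₁ + m * (t - t₁) ≤ α t) :
    clampedLine α β t₁ y₁ m t = α t :=
  max_eq_left (min_le_of_left_le hα)

theorem continuous_clampedLine_slope (t : ℝ) :
    Continuous fun m => clampedLine α β t₁ y₁ m t := by
  unfold clampedLine; fun_prop

theorem ContinuousOn.clampedLine (hα : ContinuousOn α s) (hβ : ContinuousOn β s) (m : ℝ) :
    ContinuousOn (clampedLine α β t₁ y₁ m) s := by
  unfold _root_.clampedLine; fun_prop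

theorem abs_clampedLine_sub_le (hα : ∀ x ∈ s, ∀ y ∈ s, |α y - α x| ≤ L * |y - x|)
    (hβ : ∀ x ∈ s, ∀ y ∈ s, |β y - β x| ≤ L * |y - x|) (hm : |m| ≤ L) :
    ∀ x ∈ s, ∀ y ∈ s,
      |clampedLine α β t₁ y₁ m y - clampedLine α β t₁ y₁ m x| ≤ L * |y - x| := by
  intro x hx y hy
  have hline : |(y₁ + m * (y - t₁)) - (y₁ + m * (x - t₁))| ≤ L * |y - x| := by
    rw [show (y₁ + m * (y - t₁)) - (y₁ + m * (x - t₁)) = m * (y - x) by ring, abs_mul]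
    exact mul_le_mul_of_nonneg_right hm (abs_nonneg _)
  exact (abs_max_sub_max_le_max _ _ _ _).trans <| max_le (hα x hx y hy) <|
    (abs_min_sub_min_le_max _ _ _ _).trans (max_le hline (hβ x hx y hy))

end ClampedLine

section Shooting

variable {f : ℝ → ℝ → ℝ} {α β α' β' : ℝ → ℝ} {t₁ t₂ y₁ L : ℝ}

theorem abs_apply_clampedLine_le (hαβ : ∀ t ∈ Icc t₁ t₂, α t ≤ β t)
    (hfL : ∀ t ∈ Icc t₁ t₂, ∀ y, α t ≤ y → y ≤ β t → |f t y| ≤ L) (m : ℝ) {t : ℝ}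
    (ht : t ∈ Icc t₁ t₂) : |f t (clampedLine α β t₁ y₁ m t)| ≤ L :=
  hfL t ht _ (clampedLine_mem_Icc (hαβ t ht)).1 (clampedLine_mem_Icc (hαβ t ht)).2

theorem abs_picard_clampedLine_sub_le (hαβ : ∀ t ∈ Icc t₁ t₂, α t ≤ β t)
    (hfL : ∀ t ∈ Icc t₁ t₂, ∀ y, α t ≤ y → y ≤ β t → |f t y| ≤ L) (m : ℝ) {t : ℝ}
    (ht : t ∈ Icc t₁ t₂) :
    |picard f t₁ y₁ (clampedLine α β t₁ y₁ m) t - y₁| ≤ L * (t - t₁) := by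
  have hbound : ∀ s ∈ Ι t₁ t, ‖f s (clampedLine α β t₁ y₁ m s)‖ ≤ L := fun s hs => by
    rw [uIoc_of_le ht.1] at hs
    exact abs_apply_clampedLine_le hαβ hfL m ⟨hs.1.le, hs.2.trans ht.2⟩
  simpa [abs_of_nonneg (sub_nonneg.2 ht.1)] using
    intervalIntegral.norm_integral_le_of_norm_le_const hbound

theorem hasDerivWithinAt_picard_clampedLine
    (hf : ContinuousOn (Function.uncurry f) (Icc t₁ t₂ ×ˢ univ))
    (hα : ContinuousOn α (Icc t₁ t₂)) (hβ : ContinuousOn β (Icc t₁ t₂)) (m : ℝ) :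
    ∀ x ∈ Icc t₁ t₂, HasDerivWithinAt (picard f t₁ y₁ (clampedLine α β t₁ y₁ m))
      (f x (clampedLine α β t₁ y₁ m x)) (Icc t₁ t₂) x := fun _ hx =>
  hasDerivWithinAt_picard_Icc (left_mem_Icc.2 (hx.1.trans hx.2)) hf (hα.clampedLine hβ m)
    (mapsTo_univ _ _) y₁ hx

theorem picard_clampedLine_le_right
    (hf : ContinuousOn (Function.uncurry f) (Icc t₁ t₂ ×ˢ univ))
    (hα : ContinuousOn α (Icc t₁ t₂))
    (hβd : ∀ x ∈ Icc t₁ t₂, HasDerivWithinAt β (β' x) (Icc t₁ t₂) x)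
    (hβf : ∀ x ∈ Ico t₁ t₂, f x (β x) ≤ β' x) (hαβ : ∀ t ∈ Icc t₁ t₂, α t ≤ β t)
    (hfL : ∀ t ∈ Icc t₁ t₂, ∀ y, α t ≤ y → y ≤ β t → |f t y| ≤ L) (hy₁ : y₁ ≤ β t₁) :
    ∀ t ∈ Icc t₁ t₂, picard f t₁ y₁ (clampedLine α β t₁ y₁ L) t ≤ β t := by
  refine image_le_of_deriv_le_deriv_boundary_of_contact
    (hasDerivWithinAt_picard_clampedLine hf hα (HasDerivWithinAt.continuousOn hβd) L)
    (by rwa [picard_apply₀]) hβd fun x hx hcontact => ?_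
  have hx' := Ico_subset_Icc_self hx
  have hline : β x ≤ y₁ + L * (x - t₁) := by
    linarith [(abs_le.1 (abs_picard_clampedLine_sub_le (y₁ := y₁) hαβ hfL L hx')).2]
  rw [clampedLine_eq_right (hαβ x hx') hline]
  exact hβf x hx

theorem le_picard_clampedLine_left
    (hf : ContinuousOn (Function.uncurry f) (Icc t₁ t₂ ×ˢ univ))
    (hαd : ∀ x ∈ Icc t₁ t₂, HasDerivWithinAt α (α' x) (Icc t₁ t₂) x)
    (hβ : ContinuousOn β (Icc t₁ t₂))
    (hαf : ∀ x ∈ Ico t₁ t₂, α' x ≤ f x (α x)) (hαβ : ∀ t ∈ Icc t₁ t₂, α t ≤ β t)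
    (hfL : ∀ t ∈ Icc t₁ t₂, ∀ y, α t ≤ y → y ≤ β t → |f t y| ≤ L) (hy₁ : α t₁ ≤ y₁) :
    ∀ t ∈ Icc t₁ t₂, α t ≤ picard f t₁ y₁ (clampedLine α β t₁ y₁ (-L)) t := by
  refine image_le_of_deriv_le_deriv_boundary_of_contact hαd (by rwa [picard_apply₀])
    (hasDerivWithinAt_picard_clampedLine hf (HasDerivWithinAt.continuousOn hαd) hβ (-L))
    fun x hx hcontact => ?_
  have hx' := Ico_subset_Icc_self hx
  have hline : y₁ + -L * (x - t₁) ≤ α x := by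
    linarith [(abs_le.1 (abs_picard_clampedLine_sub_le (y₁ := y₁) hαβ hfL (-L) hx')).1]
  rw [clampedLine_eq_left hline]
  exact hαf x hx

theorem continuous_picard_clampedLine_slope
    (hf : ContinuousOn (Function.uncurry f) (Icc t₁ t₂ ×ˢ univ))
    (hα : ContinuousOn α (Icc t₁ t₂)) (hβ : ContinuousOn β (Icc t₁ t₂))
    (hαβ : ∀ t ∈ Icc t₁ t₂, α t ≤ β t)
    (hfL : ∀ t ∈ Icc t₁ t₂, ∀ y, α t ≤ y → y ≤ β t → |f t y| ≤ L) (h₁₂ : t₁ ≤ t₂) :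
    Continuous fun m => picard f t₁ y₁ (clampedLine α β t₁ y₁ m) t₂ := by
  simp only [picard_apply]
  refine continuous_const.add <| intervalIntegral.continuous_of_dominated_interval
    (F := fun m t => f t (clampedLine α β t₁ y₁ m t)) (bound := fun _ => L)
    (fun m => ?_) (fun m => ?_) intervalIntegrable_const ?_
  · exact (ODE.continuousOn_comp hf (hα.clampedLine hβ m) (mapsTo_univ _ _)
      |>.intervalIntegrable_of_Icc h₁₂).def'.aestronglyMeasurable
  · refine Eventually.of_forall fun t ht => ?_
    rw [uIoc_of_le h₁₂] at ht
    exact abs_apply_clampedLine_le hαβ hfL m (Ioc_subset_Icc_self ht)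
  · refine Eventually.of_forall fun t ht => ?_
    rw [uIoc_of_le h₁₂] at ht
    exact (hf.comp_continuous (continuous_const.prodMk continuous_id)
      fun y => ⟨Ioc_subset_Icc_self ht, mem_univ y⟩).comp (continuous_clampedLine_slope t)

theorem exists_slope_clampedLine_eq_picard
    (hf : ContinuousOn (Function.uncurry f) (Icc t₁ t₂ ×ˢ univ))
    (hαd : ∀ x ∈ Icc t₁ t₂, HasDerivWithinAt α (α' x) (Icc t₁ t₂) x)
    (hβd : ∀ x ∈ Icc t₁ t₂, HasDerivWithinAt β (β' x) (Icc t₁ t₂) x)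
    (hαf : ∀ x ∈ Ico t₁ t₂, α' x ≤ f x (α x)) (hβf : ∀ x ∈ Ico t₁ t₂, f x (β x) ≤ β' x)
    (hαβ : ∀ t ∈ Icc t₁ t₂, α t ≤ β t)
    (hfL : ∀ t ∈ Icc t₁ t₂, ∀ y, α t ≤ y → y ≤ β t → |f t y| ≤ L) (h₁₂ : t₁ ≤ t₂)
    (hy₁ : y₁ ∈ Icc (α t₁) (β t₁)) :
    ∃ m ∈ Icc (-L) L,
      clampedLine α β t₁ y₁ m t₂ = picard f t₁ y₁ (clampedLine α β t₁ y₁ m) t₂ := by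
  have hα := HasDerivWithinAt.continuousOn hαd
  have hβ := HasDerivWithinAt.continuousOn hβd
  have hL : 0 ≤ L := (abs_nonneg _).trans (hfL t₁ (left_mem_Icc.2 h₁₂) y₁ hy₁.1 hy₁.2)
  have ht₂ := right_mem_Icc.2 h₁₂
  have hpicard (m : ℝ) := abs_le.1 (abs_picard_clampedLine_sub_le (y₁ := y₁) hαβ hfL m ht₂)
  set Φ : ℝ → ℝ := fun m =>
    clampedLine α β t₁ y₁ m t₂ - picard f t₁ y₁ (clampedLine α β t₁ y₁ m) t₂
  have hΦ : Continuous Φ := (continuous_clampedLine_slope t₂).sub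
    (continuous_picard_clampedLine_slope hf hα hβ hαβ hfL h₁₂)
  have hΦL : 0 ≤ Φ L := by
    have : picard f t₁ y₁ (clampedLine α β t₁ y₁ L) t₂ ≤ clampedLine α β t₁ y₁ L t₂ :=
      le_max_of_le_right <| le_min (by linarith [(hpicard L).2])
        (picard_clampedLine_le_right hf hα hβd hβf hαβ hfL hy₁.2 t₂ ht₂)
    exact sub_nonneg.2 this
  have hΦnL : Φ (-L) ≤ 0 := by
    have : clampedLine α β t₁ y₁ (-L) t₂ ≤ picard f t₁ y₁ (clampedLine α β t₁ y₁ (-L)) t₂ :=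
      max_le (le_picard_clampedLine_left hf hαd hβ hαf hαβ hfL hy₁.1 t₂ ht₂)
        (min_le_of_left_le (by linarith [(hpicard (-L)).1]))
    exact sub_nonpos.2 this
  obtain ⟨m, hm, hΦm⟩ := intermediate_value_Icc (neg_le_self hL) hΦ.continuousOn ⟨hΦnL, hΦL⟩
  exact ⟨m, hm, sub_eq_zero.1 hΦm⟩

end Shooting

theorem bridge_lemma (t0 a : ℝ)
    (f : ℝ → ℝ → ℝ)
    (hf : ContinuousOn (fun p : ℝ × ℝ => f p.1 p.2)
      (Icc t0 (t0 + a) ×ˢ (univ : Set ℝ)))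
    (α β α' β' : ℝ → ℝ)
    (hαd : ∀ t ∈ Icc t0 (t0 + a), HasDerivWithinAt α (α' t) (Icc t0 (t0 + a)) t)
    (hαf : ∀ t ∈ Icc t0 (t0 + a), α' t ≤ f t (α t))
    (hβd : ∀ t ∈ Icc t0 (t0 + a), HasDerivWithinAt β (β' t) (Icc t0 (t0 + a)) t)
    (hβf : ∀ t ∈ Icc t0 (t0 + a), f t (β t) ≤ β' t)
    (hαβ : ∀ t ∈ Icc t0 (t0 + a), α t ≤ β t)
    (L : ℝ)
    (hfL : ∀ t ∈ Icc t0 (t0 + a), ∀ y : ℝ, α t ≤ y → y ≤ β t → |f t y| ≤ L)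
    (hαL : ∀ t ∈ Icc t0 (t0 + a), |α' t| ≤ L)
    (hβL : ∀ t ∈ Icc t0 (t0 + a), |β' t| ≤ L)
    (t1 t2 : ℝ) (ht1 : t1 ∈ Icc t0 (t0 + a)) (ht2 : t2 ∈ Icc t0 (t0 + a))
    (h12 : t1 < t2) (y1 : ℝ) (hy1 : y1 ∈ Icc (α t1) (β t1)) :
    ∃ γ : ℝ → ℝ,
      ContinuousOn γ (Icc t0 (t0 + a)) ∧
      (∀ t ∈ Icc t0 (t0 + a), α t ≤ γ t ∧ γ t ≤ β t) ∧
      (∀ s ∈ Icc t0 (t0 + a), ∀ t ∈ Icc t0 (t0 + a), |γ t - γ s| ≤ L * |t - s|) ∧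
      γ t1 = y1 ∧
      γ t2 = y1 + ∫ s in t1..t2, f s (γ s) := by
  have hJ : Icc t1 t2 ⊆ Icc t0 (t0 + a) := Icc_subset_Icc ht1.1 ht2.2
  have hJ' : Ico t1 t2 ⊆ Icc t0 (t0 + a) := Ico_subset_Icc_self.trans hJ
  obtain ⟨m, hm, hγ₂⟩ := exists_slope_clampedLine_eq_picard (hf.mono (prod_mono hJ subset_rfl))
    (fun t ht => (hαd t (hJ ht)).mono hJ) (fun t ht => (hβd t (hJ ht)).mono hJ)
    (fun t ht => hαf t (hJ' ht)) (fun t ht => hβf t (hJ' ht)) (fun t ht => hαβ t (hJ ht))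
    (fun t ht => hfL t (hJ ht)) h12.le hy1
  refine ⟨clampedLine α β t1 y1 m,
    (HasDerivWithinAt.continuousOn hαd).clampedLine (HasDerivWithinAt.continuousOn hβd) m,
    fun t ht => clampedLine_mem_Icc (hαβ t ht),
    abs_clampedLine_sub_le ((convex_Icc _ _).abs_image_sub_le_of_abs_hasDerivWithin_le hαd hαL)
      ((convex_Icc _ _).abs_image_sub_le_of_abs_hasDerivWithin_le hβd hβL) (abs_le.2 hm),
    clampedLine_self hy1 m, hγ₂⟩
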